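/- Let w be a Lyndon word of length at least 2 over a totally ordered alphabet and let w = uv be its left standard factorization, i.e., u is the longest nonempty proper prefix of w that is a Lyndon word and v is the corresponding suffix. Then both u and v are Lyndon words and u < v lexicographically. Moreover, if v has length at least 2 and v = v₁v₂ is its left standard factorization, then v₁ ≤ u lexicographically. -/

import Mathlib

variable {A : Type*} [LinearOrder A]

/-- A nonempty word `w` is a Lyndon word: `w` is lexicographically smaller than
each of its nonempty proper suffixes. -/
def IsLyndon (w : List A) : Prop :=
  w ≠ [] ∧ ∀ v, v <:+ w → v ≠ [] → v ≠ w → List.Lex (· < ·) w v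

/-- `w = uv` is the left standard factorization of `w`: `u` is the longest nonempty
proper prefix of `w` that is a Lyndon word, and `v` the corresponding suffix. -/
def LeftStdFact (w u v : List A) : Prop :=
  w = u ++ v ∧ u ≠ [] ∧ v ≠ [] ∧ IsLyndon u ∧
    ∀ u', u' <+: w → u' ≠ [] → u' ≠ w → IsLyndon u' → u'.length ≤ u.length

set_option linter.unusedSectionVars false
set_option linter.unusedVariables false

namespace LyndonAux

theorem lex_trans {x y z : List A} (h1 : List.Lex (· < ·) x y) (h2 : List.Lex (· < ·) y z) :
    List.Lex (· < ·) x z := List.lex_trans (fun h h' => lt_trans h h') h1 h2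

theorem lex_asymm {x y : List A} (h1 : List.Lex (· < ·) x y) (h2 : List.Lex (· < ·) y x) :
    False := Std.Asymm.asymm x y h1 h2

theorem lex_append_iff (p : List A) {x y : List A} :
    List.Lex (· < ·) (p ++ x) (p ++ y) ↔ List.Lex (· < ·) x y := by
  induction p with
  | nil => simp
  | cons a p ih => simpa [List.cons_append, List.lex_cons_iff] using ih

theorem lex_mid (p : List A) {a b : A} (x y : List A) (h : a < b) :
    List.Lex (· < ·) (p ++ a :: x) (p ++ b :: y) := (lex_append_iff p).mpr (List.Lex.rel h)

theorem lex_mid' (p : List A) (a b : A) (x y : List A) {l₁ l₂ : List A} (h : a < b)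
    (h₁ : l₁ = p ++ a :: x) (h₂ : l₂ = p ++ b :: y) : List.Lex (· < ·) l₁ l₂ := by
  subst h₁; subst h₂; exact lex_mid p x y h

theorem lex_of_prefix {x y : List A} (h : x <+: y) (hne : x ≠ y) :
    List.Lex (· < ·) x y := by
  obtain ⟨t, rfl⟩ := h
  cases t with
  | nil => simp at hne
  | cons c t =>
    conv_lhs => rw [← List.append_nil x]
    exact (lex_append_iff x).mpr List.Lex.nil

theorem lex_mismatch {x y : List A} (h : List.Lex (· < ·) x y) (hp : ¬ x <+: y) :
    ∃ (p x' y' : List A) (a b : A), x = p ++ a :: x' ∧ y = p ++ b :: y' ∧ a < b := by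
  induction h with
  | nil => exact absurd List.nil_prefix hp
  | @rel a l₁ b l₂ hab => exact ⟨[], l₁, l₂, a, b, rfl, rfl, hab⟩
  | @cons a l₁ l₂ h ih =>
    have h' : ¬ l₁ <+: l₂ := fun hh => hp (List.cons_prefix_cons.mpr ⟨rfl, hh⟩)
    obtain ⟨p, x', y', c, d, h1, h2, h3⟩ := ih h'
    exact ⟨a :: p, x', y', c, d, by simp [h1], by simp [h2], h3⟩

theorem lex_extend {x y : List A} (h : List.Lex (· < ·) x y) (hp : ¬ x <+: y) (X Y : List A) :
    List.Lex (· < ·) (x ++ X) (y ++ Y) := by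
  obtain ⟨p, x', y', a, b, rfl, rfl, hab⟩ := lex_mismatch h hp
  exact lex_mid' p a b (x' ++ X) (y' ++ Y) hab (by simp) (by simp)

theorem suffix_append_cases {s x y : List A} (h : s <:+ x ++ y) :
    s <:+ y ∨ ∃ s₁, s₁ <:+ x ∧ s = s₁ ++ y := by
  obtain ⟨t, ht⟩ := h
  rcases List.append_eq_append_iff.mp ht with ⟨e, h1, h2⟩ | ⟨e, h1, h2⟩
  · exact Or.inr ⟨e, ⟨t, h1.symm⟩, h2⟩
  · exact Or.inl ⟨e, h2.symm⟩


def rep (u : List A) : ℕ → List A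
  | 0 => []
  | n + 1 => u ++ rep u n

theorem rep_succ (u : List A) (n : ℕ) : rep u (n + 1) = u ++ rep u n := rfl

theorem rep_succ' (u : List A) (n : ℕ) : rep u (n + 1) = rep u n ++ u := by
  induction n with
  | zero => simp [rep]
  | succ n ih => rw [rep_succ, ih, ← List.append_assoc, ← rep_succ, ih]

theorem rep_add (u : List A) (m n : ℕ) : rep u (m + n) = rep u m ++ rep u n := by
  induction m with
  | zero => simp [rep]
  | succ m ih =>
    have : m + 1 + n = (m + n) + 1 := by omega
    rw [this, rep_succ, ih, rep_succ, List.append_assoc]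

theorem rep_length (u : List A) (n : ℕ) : (rep u n).length = n * u.length := by
  induction n with
  | zero => simp [rep]
  | succ n ih => rw [rep_succ, List.length_append, ih]; ring

theorem rep_prefix_rep (u : List A) {i j : ℕ} (h : i ≤ j) : rep u i <+: rep u j :=
  ⟨rep u (j - i), by rw [← rep_add]; congr 1; omega⟩

theorem suffix_rep {u : List A} (hu : u ≠ []) {s₁ : List A} {k : ℕ} (h : s₁ <:+ rep u k) :
    ∃ j s₃, j ≤ k ∧ s₃ <:+ u ∧ s₃.length < u.length ∧ s₁ = s₃ ++ rep u j := by
  induction k with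
  | zero =>
    have hs : s₁ = [] := List.eq_nil_of_suffix_nil h
    exact ⟨0, [], le_refl _, List.nil_suffix, List.length_pos_iff.mpr hu, by simp [rep, hs]⟩
  | succ k ih =>
    rcases suffix_append_cases (h : s₁ <:+ u ++ rep u k) with h' | ⟨s₄, hs4, rfl⟩
    · obtain ⟨j, s₃, hj, h1, h2, h3⟩ := ih h'
      exact ⟨j, s₃, hj.trans (Nat.le_succ k), h1, h2, h3⟩
    · by_cases hlen : s₄.length < u.length
      · exact ⟨k, s₄, Nat.le_succ k, hs4, hlen, rfl⟩
      · have hequ : s₄ = u := hs4.eq_of_length (le_antisymm hs4.length_le (not_lt.mp hlen))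
        subst hequ
        exact ⟨k + 1, [], le_refl _, List.nil_suffix, List.length_pos_iff.mpr hu, by
          rw [rep_succ]; simp⟩


theorem core {u p q s₂ : List A} {a : A} (hu : IsLyndon u) (hup : u = p ++ a :: q)
    (hs : s₂ ++ a :: q <:+ u) (hne : s₂ ≠ p) :
    (∃ x, x < a ∧ s₂ ++ [x] <+: p) ∨ (s₂ ++ [a] <+: p) ∨
    (∃ p₀ e' x y, x < y ∧ p₀ ++ [x] <+: p ∧ s₂ = p₀ ++ y :: e') := by
  have hlenle : s₂.length ≤ p.length := by
    have h1 := hs.length_le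
    rw [hup] at h1
    simp only [List.length_append, List.length_cons] at h1
    omega
  have hlen : s₂.length < p.length := by
    rcases lt_or_eq_of_le hlenle with h | h
    · exact h
    · exfalso
      have heq : s₂ ++ a :: q = u := hs.eq_of_length (by rw [hup]; simp [h])
      rw [hup] at heq
      exact hne (List.append_cancel_right heq)
  have hne' : s₂ ++ a :: q ≠ u := fun h => by
    have := congrArg List.length h
    rw [hup] at this
    simp only [List.length_append, List.length_cons] at this
    omega
  have hlex : List.Lex (· < ·) u (s₂ ++ a :: q) := hu.2 _ hs (by simp) hne'
  have hnp : ¬ u <+: s₂ ++ a :: q := fun h => by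
    have h2 := h.length_le
    rw [hup] at h2
    simp only [List.length_append, List.length_cons] at h2
    omega
  obtain ⟨p₀, u₀, t₀, x, y, hu', ht', hxy⟩ := lex_mismatch hlex hnp
  have hpu : p <+: u := ⟨a :: q, hup.symm⟩
  rcases List.append_eq_append_iff.mp ht' with ⟨e, he1, he2⟩ | ⟨e, he1, he2⟩
  · -- p₀ = s₂ ++ e, a :: q = e ++ y :: t₀
    cases e with
    | nil =>
      simp only [List.append_nil] at he1
      simp only [List.nil_append] at he2
      injection he2 with hay hqt
      left
      refine ⟨x, by rw [hay]; exact hxy, ?_⟩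
      have h1 : s₂ ++ [x] <+: u := ⟨u₀, by rw [hu', he1]; simp⟩
      exact List.prefix_of_prefix_length_le h1 hpu
        (by simp only [List.length_append, List.length_cons, List.length_nil]; omega)
    | cons f e' =>
      simp only [List.cons_append] at he2
      injection he2 with haf hq
      right; left
      have h1 : s₂ ++ [a] <+: u := by
        refine ⟨e' ++ x :: u₀, ?_⟩
        rw [hu', he1, haf]
        simp
      exact List.prefix_of_prefix_length_le h1 hpu
        (by simp only [List.length_append, List.length_cons, List.length_nil]; omega)
  · -- s₂ = p₀ ++ e, y :: t₀ = e ++ a :: q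
    cases e with
    | nil =>
      simp only [List.append_nil] at he1
      simp only [List.nil_append] at he2
      injection he2 with hya htq
      left
      refine ⟨x, by rw [← hya]; exact hxy, ?_⟩
      have h1 : s₂ ++ [x] <+: u := ⟨u₀, by rw [hu', he1]; simp⟩
      exact List.prefix_of_prefix_length_le h1 hpu
        (by simp only [List.length_append, List.length_cons, List.length_nil]; omega)
    | cons f e' =>
      simp only [List.cons_append] at he2
      injection he2 with hyf ht0
      right; right
      refine ⟨p₀, e', x, y, hxy, ?_, by rw [he1, hyf]⟩
      have h1 : p₀ ++ [x] <+: u := ⟨u₀, by rw [hu']; simp⟩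
      have hp₀s : p₀.length < s₂.length := by rw [he1]; simp
      exact List.prefix_of_prefix_length_le h1 hpu
        (by simp only [List.length_append, List.length_cons, List.length_nil]; omega)

theorem lyndon_lex_right {u p q s₂ : List A} {a b : A} (hu : IsLyndon u)
    (hup : u = p ++ a :: q) (hs : s₂ ++ a :: q <:+ u) (hab : a < b) (X Y : List A) :
    List.Lex (· < ·) (u ++ X) (s₂ ++ b :: Y) := by
  by_cases hne : s₂ = p
  · subst hne
    exact lex_mid' s₂ a b (q ++ X) Y hab (by rw [hup]; simp) rfl
  rcases core hu hup hs hne with ⟨x, hxa, hpre⟩ | hpre | ⟨p₀, e', x, y, hxy, hpre, rfl⟩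
  · obtain ⟨r, hr⟩ := hpre
    exact lex_mid' s₂ x b (r ++ a :: (q ++ X)) Y (hxa.trans hab)
      (by rw [hup, ← hr]; simp) rfl
  · obtain ⟨r, hr⟩ := hpre
    exact lex_mid' s₂ a b (r ++ a :: (q ++ X)) Y hab (by rw [hup, ← hr]; simp) rfl
  · obtain ⟨r, hr⟩ := hpre
    exact lex_mid' p₀ x y (r ++ a :: (q ++ X)) (e' ++ b :: Y) hxy
      (by rw [hup, ← hr]; simp) (by simp)

theorem lyndon_lex_right' {u p q s₂ : List A} {a b : A} (hu : IsLyndon u)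
    (hup : u = p ++ a :: q) (hs : s₂ ++ a :: q <:+ u) (hne : s₂ ≠ p) (hab : a < b)
    (X Y : List A) :
    List.Lex (· < ·) (p ++ b :: X) (s₂ ++ b :: Y) := by
  rcases core hu hup hs hne with ⟨x, hxa, hpre⟩ | hpre | ⟨p₀, e', x, y, hxy, hpre, rfl⟩
  · obtain ⟨r, hr⟩ := hpre
    exact lex_mid' s₂ x b (r ++ b :: X) Y (hxa.trans hab) (by rw [← hr]; simp) rfl
  · obtain ⟨r, hr⟩ := hpre
    exact lex_mid' s₂ a b (r ++ b :: X) Y hab (by rw [← hr]; simp) rfl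
  · obtain ⟨r, hr⟩ := hpre
    exact lex_mid' p₀ x y (r ++ b :: X) (e' ++ b :: Y) hxy (by rw [← hr]; simp) (by simp)

theorem duval {u p q : List A} {a b : A} (hu : IsLyndon u) (hup : u = p ++ a :: q)
    (hab : a < b) (k : ℕ) : IsLyndon (rep u k ++ (p ++ [b])) := by
  refine ⟨by simp, ?_⟩
  intro s hs hsne hsneL
  rcases suffix_append_cases hs with hA | ⟨s₁, hs₁, rfl⟩
  · have hdec : ∃ s₂, s₂ <:+ p ∧ s = s₂ ++ [b] := by
      rcases suffix_append_cases hA with hB | ⟨s₂, hs₂, rfl⟩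
      · rcases List.suffix_cons_iff.mp hB with h | h
        · exact ⟨[], List.nil_suffix, by simp [h]⟩
        · exact absurd (List.eq_nil_of_suffix_nil h) hsne
      · exact ⟨s₂, hs₂, rfl⟩
    obtain ⟨s₂, hs₂p, rfl⟩ := hdec
    have hsuf : s₂ ++ a :: q <:+ u := by
      obtain ⟨t, ht⟩ := hs₂p
      exact ⟨t, by rw [hup, ← ht]; simp⟩
    cases k with
    | zero =>
      have hne : s₂ ≠ p := fun h => hsneL (by rw [h]; simp [rep])
      have h := lyndon_lex_right' hu hup hsuf hne hab [] []
      simpa [rep] using h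
    | succ k' =>
      have h := lyndon_lex_right hu hup hsuf hab (rep u k' ++ (p ++ [b])) []
      simpa [rep_succ, List.append_assoc] using h
  · obtain ⟨j, s₃, hj, hs₃, hlen₃, rfl⟩ := suffix_rep hu.1 hs₁
    by_cases h3 : s₃ = []
    · subst h3
      simp only [List.nil_append] at hsneL ⊢
      have hjk : j < k := by
        rcases lt_or_eq_of_le hj with h | h
        · exact h
        · exact absurd (by rw [h]) hsneL
      have hsplit : rep u k = rep u j ++ rep u (k - j) := by
        rw [← rep_add]; congr 1; omega
      rw [hsplit, List.append_assoc]
      refine (lex_append_iff (rep u j)).mpr ?_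
      obtain ⟨d, hd⟩ : ∃ d, k - j = d + 1 := ⟨k - j - 1, by omega⟩
      rw [hd, rep_succ, List.append_assoc]
      exact lyndon_lex_right hu hup (s₂ := p)
        (by rw [hup]) hab (rep u d ++ (p ++ [b])) []
    · have h1 : List.Lex (· < ·) u s₃ := hu.2 s₃ hs₃ h3
        (fun h => absurd hlen₃ (by rw [h]; exact lt_irrefl _))
      have h2 : ¬ u <+: s₃ := fun h => absurd h.length_le (by omega)
      obtain ⟨k', rfl⟩ : ∃ k', k = k' + 1 := by
        cases k with
        | zero =>
          exfalso
          have h0 : s₃ ++ rep u j <:+ ([] : List A) := hs₁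
          exact h3 (List.append_eq_nil_iff.mp (List.eq_nil_of_suffix_nil h0)).1
        | succ k' => exact ⟨k', rfl⟩
      rw [rep_succ, List.append_assoc]
      have h := lex_extend h1 h2 (rep u k' ++ (p ++ [b])) (rep u j ++ (p ++ [b]))
      simpa [List.append_assoc] using h

theorem not_lyndon_of_prefix_rep {u m : List A} {n : ℕ} (hm : m <+: rep u n)
    (hlen : u.length < m.length) : ¬ IsLyndon m := by
  intro hly
  have hmlen := hm.length_le
  rw [rep_length] at hmlen
  have hune : u ≠ [] := by
    intro h
    rw [h] at hmlen hlen
    simp only [List.length_nil, Nat.mul_zero] at hmlen hlen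
    omega
  have hupos : 0 < u.length := List.length_pos_iff.mpr hune
  have hn : 1 ≤ n := by
    by_contra h
    have : n = 0 := by omega
    rw [this] at hmlen
    omega
  have hu_pre : u <+: rep u n := by
    have : rep u n = u ++ rep u (n - 1) := by
      rw [← rep_succ]; congr 1; omega
    rw [this]; exact List.prefix_append u _
  have h1 : u <+: m := List.prefix_of_prefix_length_le hu_pre hm (le_of_lt hlen)
  obtain ⟨m', rfl⟩ := h1
  have hm'ne : m' ≠ [] := by
    intro h
    rw [h] at hlen
    simp at hlen
  have h2 : m' <+: rep u (n - 1) := by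
    have hr : rep u n = u ++ rep u (n - 1) := by
      rw [← rep_succ]; congr 1; omega
    rw [hr] at hm
    obtain ⟨t, ht⟩ := hm
    rw [List.append_assoc] at ht
    exact ⟨t, List.append_cancel_left ht⟩
  have h3 : m' <+: u ++ m' :=
    List.prefix_of_prefix_length_le (h2.trans (rep_prefix_rep u (by omega : n - 1 ≤ n))) hm
      (by simp)
  have h4 : List.Lex (· < ·) m' (u ++ m') :=
    lex_of_prefix h3 (by
      intro h
      have := congrArg List.length h
      rw [List.length_append] at this
      omega)
  have h5 := hly.2 m' ⟨u, rfl⟩ hm'ne (by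
    intro h
    have := congrArg List.length h
    rw [List.length_append] at this
    omega)
  exact lex_asymm h4 h5

theorem structure_lemma {w u v : List A} (hw : IsLyndon w)
    (hwuv : w = u ++ v) (hune : u ≠ []) (hvne : v ≠ []) (hlyu : IsLyndon u)
    (hmax : ∀ u', u' <+: w → u' ≠ [] → u' ≠ w → IsLyndon u' → u'.length ≤ u.length) :
    ∃ (k : ℕ) (p₀ q₀ : List A) (x y : A), 1 ≤ k ∧ x < y ∧ u = p₀ ++ x :: q₀ ∧
      w = rep u k ++ (p₀ ++ [y]) ∧ v = rep u (k - 1) ++ (p₀ ++ [y]) := by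
  classical
  have hulen : 0 < u.length := List.length_pos_iff.mpr hune
  have huw : u <+: w := ⟨v, hwuv.symm⟩
  have hulw : u.length < w.length := by
    rw [hwuv, List.length_append]
    have := List.length_pos_iff.mpr hvne
    omega
  set P : ℕ → Prop := fun k => rep u k <+: w with hP
  set k := Nat.findGreatest P w.length with hkdef
  have hP1 : P 1 := by
    show rep u 1 <+: w
    simpa [rep_succ, rep] using huw
  have hk1 : 1 ≤ k := Nat.le_findGreatest (by omega) hP1
  have hkP : rep u k <+: w := Nat.findGreatest_spec (by omega : 1 ≤ w.length) hP1
  have hknot : ¬ (rep u (k + 1) <+: w) := by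
    intro hcon
    have hlen' := hcon.length_le
    rw [rep_length] at hlen'
    have hkb : k + 1 ≤ w.length := by
      have : k + 1 ≤ (k + 1) * u.length := Nat.le_mul_of_pos_right _ hulen
      omega
    exact Nat.findGreatest_is_greatest (Nat.lt_succ_self k) hkb hcon
  obtain ⟨z, hz⟩ := hkP
  have hrepklen : 0 < (rep u k).length := by
    rw [rep_length]
    exact Nat.mul_pos hk1 hulen
  have hzne : z ≠ [] := by
    intro h
    rw [h, List.append_nil] at hz
    have hk2 : 2 ≤ k := by
      by_contra h'
      have hk1' : k = 1 := by omega
      rw [hk1'] at hz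
      simp [rep_succ, rep] at hz
      rw [← hz] at hulw
      omega
    have hr1 : rep u k = u ++ rep u (k - 1) := by
      rw [← rep_succ]; congr 1; omega
    have hsuf : rep u (k - 1) <:+ w := ⟨u, by rw [← hz, hr1]⟩
    have hpre : rep u (k - 1) <+: w := by
      rw [← hz]; exact rep_prefix_rep u (by omega)
    have hrne : rep u (k - 1) ≠ [] :=
      List.length_pos_iff.mp (by rw [rep_length]; exact Nat.mul_pos (by omega) hulen)
    have hrnw : rep u (k - 1) ≠ w := by
      intro h'
      have := congrArg List.length h'
      rw [rep_length, ← hz, rep_length] at this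
      have hmul : (k - 1) * u.length < k * u.length :=
        mul_lt_mul_of_pos_right (by omega) hulen
      omega
    exact lex_asymm (lex_of_prefix hpre hrnw) (hw.2 _ hsuf hrne hrnw)
  have hzsuf : z <:+ w := ⟨rep u k, hz⟩
  have hzlen : z.length < w.length := by
    rw [← hz, List.length_append]
    omega
  have hzw : z ≠ w := by
    intro h
    rw [h] at hzlen
    omega
  have hlexwz := hw.2 z hzsuf hzne hzw
  have hnp : ¬ w <+: z := fun h => absurd h.length_le (by omega)
  obtain ⟨p₀, w₀, z₀, x, y, hwdec, hzdec, hxy⟩ := lex_mismatch hlexwz hnp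
  have hp₀len : p₀.length < u.length := by
    by_contra h'
    have h1 : p₀ <+: w := ⟨x :: w₀, hwdec.symm⟩
    have h2 : u <+: p₀ := List.prefix_of_prefix_length_le huw h1 (by omega)
    have h3 : u <+: z := h2.trans ⟨y :: z₀, hzdec.symm⟩
    obtain ⟨z₂, hz₂⟩ := h3
    apply hknot
    refine ⟨z₂, ?_⟩
    rw [rep_succ', List.append_assoc, hz₂, hz]
  have hpxu : p₀ ++ [x] <+: u := by
    have h1 : p₀ ++ [x] <+: w := ⟨w₀, by rw [hwdec]; simp⟩
    exact List.prefix_of_prefix_length_le h1 huw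
      (by simp only [List.length_append, List.length_cons, List.length_nil]; omega)
  obtain ⟨q₀, hq₀⟩ := hpxu
  have hup : u = p₀ ++ x :: q₀ := by rw [← hq₀]; simp
  have hD : IsLyndon (rep u k ++ (p₀ ++ [y])) := duval hlyu hup hxy k
  have hDpre : (rep u k ++ (p₀ ++ [y])) <+: w := ⟨z₀, by rw [← hz, hzdec]; simp⟩
  have hDlen : u.length < (rep u k ++ (p₀ ++ [y])).length := by
    simp only [List.length_append, rep_length, List.length_cons, List.length_nil]
    have : u.length ≤ k * u.length := Nat.le_mul_of_pos_left _ hk1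
    omega
  have hDw : rep u k ++ (p₀ ++ [y]) = w := by
    by_contra hne
    have := hmax _ hDpre (by simp) hne hD
    omega
  have hz₀ : z₀ = [] := by
    have h1 : (rep u k ++ (p₀ ++ [y])) ++ z₀ = rep u k ++ (p₀ ++ [y]) := by
      conv_rhs => rw [hDw, ← hz, hzdec]
      simp
    have h2 := congrArg List.length h1
    rw [List.length_append] at h2
    have h3 : z₀.length = 0 := by omega
    exact List.length_eq_zero_iff.mp h3
  have hv : v = rep u (k - 1) ++ (p₀ ++ [y]) := by
    have hk' : k - 1 + 1 = k := by omega
    have h1 : u ++ v = u ++ (rep u (k - 1) ++ (p₀ ++ [y])) := by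
      calc u ++ v = w := hwuv.symm
        _ = rep u k ++ (p₀ ++ [y]) := hDw.symm
        _ = rep u ((k - 1) + 1) ++ (p₀ ++ [y]) := by rw [hk']
        _ = u ++ (rep u (k - 1) ++ (p₀ ++ [y])) := by rw [rep_succ, List.append_assoc]
    exact List.append_cancel_left h1
  exact ⟨k, p₀, q₀, x, y, hk1, hxy, hup, hDw.symm, hv⟩

end LyndonAux

/-- (Viennot) Let `w` be a Lyndon word of length at least 2 with left standard
factorization `w = uv`. Then `u` and `v` are Lyndon words and `u < v`.
Moreover, if `v` has length at least 2 and `v = v₁v₂` is its left standard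
factorization, then `v₁ ≤ u`. -/
theorem leftStdFact_props (w u v : List A) (hw : IsLyndon w) (hlen : 2 ≤ w.length)
    (hfact : LeftStdFact w u v) :
    IsLyndon u ∧ IsLyndon v ∧ List.Lex (· < ·) u v ∧
    (∀ v₁ v₂ : List A, 2 ≤ v.length → LeftStdFact v v₁ v₂ →
      List.Lex (· < ·) v₁ u ∨ v₁ = u) := by
  obtain ⟨hwuv, hune, hvne, hlyu, hmax⟩ := hfact
  obtain ⟨k, p₀, q₀, x, y, hk1, hxy, hup, hwst, hvst⟩ :=
    LyndonAux.structure_lemma hw hwuv hune hvne hlyu hmax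
  have hulen : 0 < u.length := List.length_pos_iff.mpr hune
  have hp₀u : p₀ <+: u := ⟨x :: q₀, hup.symm⟩
  have hp₀len : p₀.length < u.length := by
    have h := congrArg List.length hup
    rw [List.length_append, List.length_cons] at h
    omega
  refine ⟨hlyu, ?_, ?_, ?_⟩
  · rw [hvst]; exact LyndonAux.duval hlyu hup hxy (k - 1)
  · have h1 : List.Lex (· < ·) u w :=
      LyndonAux.lex_of_prefix ⟨v, hwuv.symm⟩ (by
        intro h
        rw [← h] at hwuv
        have h2 := congrArg List.length hwuv
        rw [List.length_append] at h2
        have := List.length_pos_iff.mpr hvne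
        omega)
    have h2 : List.Lex (· < ·) w v := hw.2 v ⟨u, hwuv.symm⟩ hvne (by
        intro h
        rw [h] at hwuv
        have h2 := congrArg List.length hwuv
        rw [List.length_append] at h2
        have := List.length_pos_iff.mpr hune
        omega)
    exact LyndonAux.lex_trans h1 h2
  · intro v₁ v₂ hvlen2 hfact₂
    obtain ⟨hv12, hv1ne, hv2ne, hlyv1, hmax₂⟩ := hfact₂
    have hv₁v : v₁ <+: v := ⟨v₂, hv12.symm⟩
    have hv₁lt : v₁.length < v.length := by
      rw [hv12, List.length_append]
      have := List.length_pos_iff.mpr hv2ne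
      omega
    by_cases hk : k = 1
    · left
      rw [hk] at hvst
      have hvpy : v = p₀ ++ [y] := by simpa [LyndonAux.rep] using hvst
      have hv₁p : v₁ <+: p₀ := by
        apply List.prefix_of_prefix_length_le hv₁v ⟨[y], hvpy.symm⟩
        rw [hvpy, List.length_append, List.length_cons, List.length_nil] at hv₁lt
        omega
      refine LyndonAux.lex_of_prefix (hv₁p.trans hp₀u) ?_
      intro h
      have h1 := hv₁p.length_le
      have h2 := congrArg List.length h
      omega
    · right
      have hk2 : 2 ≤ k := by omega
      have hk1' : 1 ≤ k - 1 := by omega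
      have hrsplit : LyndonAux.rep u (k - 1) = u ++ LyndonAux.rep u (k - 2) := by
        rw [← LyndonAux.rep_succ]; congr 1; omega
      have huv : u <+: v := by
        rw [hvst, hrsplit, List.append_assoc]; exact List.prefix_append u _
      have hulenv : u.length < v.length := by
        rw [hvst]
        simp only [List.length_append, LyndonAux.rep_length, List.length_cons,
          List.length_nil]
        have : u.length ≤ (k - 1) * u.length := Nat.le_mul_of_pos_left _ hk1'
        omega
      have h1 : u.length ≤ v₁.length :=
        hmax₂ u huv hune (by intro h; rw [h] at hulenv; omega) hlyu
      have h2 : v₁.length ≤ u.length := by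
        by_contra h'
        have hbig : LyndonAux.rep u (k - 1) ++ p₀ <+: LyndonAux.rep u k := by
          have hsp : LyndonAux.rep u k = LyndonAux.rep u (k - 1) ++ u := by
            rw [← LyndonAux.rep_succ']; congr 1; omega
          rw [hsp]
          obtain ⟨t, ht⟩ := hp₀u
          exact ⟨t, by rw [List.append_assoc, ht]⟩
        have hvsm : v₁ <+: LyndonAux.rep u (k - 1) ++ p₀ := by
          apply List.prefix_of_prefix_length_le hv₁v ⟨[y], by rw [hvst]; simp⟩
          have hlv := congrArg List.length hvst
          rw [List.length_append, List.length_append, List.length_cons,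
            List.length_nil] at hlv
          rw [List.length_append]
          omega
        exact LyndonAux.not_lyndon_of_prefix_rep (hvsm.trans hbig) (by omega) hlyv1
      have heq : v₁.length = u.length := le_antisymm h2 h1
      exact (List.prefix_of_prefix_length_le hv₁v huv (le_of_eq heq)).eq_of_length heq
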